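/- arXiv:2003.04062 — 5 statements merged into one kernel-verified Lean document; each statement's English description precedes it below -/
import Mathlib

section
/- In a digraph D = (V,A) with a multiset R = {r_1, ..., r_k} of vertices of V, there exist pairwise arc-disjoint spanning r_i-arborescences (i = 1,...,k) if and only if for every nonempty subset X of V, the in-degree d_A^-(X) is at least the number of roots r_i not in X. -/
open Set

section Defs

variable {V A E S : Type}

/-- In-degree of a vertex set: number of arcs with tail outside `X` and head in `X`. -/
noncomputable def din (tl hd : A → V) (X : Set V) : ℕ :=
  {a | tl a ∉ X ∧ hd a ∈ X}.ncard

/-- One step in a mixed graph: an arc used forwards, or an edge used in either direction. -/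
def mstep (tl hd : A → V) (e1 e2 : E → V) (u v : V) : Prop :=
  (∃ a, tl a = u ∧ hd a = v) ∨ (∃ e, (e1 e = u ∧ e2 e = v) ∨ (e2 e = u ∧ e1 e = v))

/-- Mixed reachability. -/
def mreach (tl hd : A → V) (e1 e2 : E → V) : V → V → Prop :=
  Relation.ReflTransGen (mstep tl hd e1 e2)

/-- `Wset X` is `X` together with all vertices from which `X` is reachable. -/
def Wset (tl hd : A → V) (e1 e2 : E → V) (X : Set V) : Set V :=
  {v | ∃ x ∈ X, mreach tl hd e1 e2 v x}

/-- `Uset r` is the set of vertices reachable from `r`. -/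
def Uset (tl hd : A → V) (e1 e2 : E → V) (r : V) : Set V :=
  {v | mreach tl hd e1 e2 r v}

/-- Pure digraph reachability-closure (no undirected edges). -/
def dW (tl hd : A → V) (X : Set V) : Set V :=
  Wset tl hd (Empty.elim : Empty → V) (Empty.elim : Empty → V) X

/-- Pure digraph reachability set from a root. -/
def dU (tl hd : A → V) (r : V) : Set V :=
  Uset tl hd (Empty.elim : Empty → V) (Empty.elim : Empty → V) r

/-- `B` is the arc set of an `r`-arborescence with vertex set `VT`:
every arc of `B` stays in `VT`, no arc of `B` enters `r`, every other vertex of `VT`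
has exactly one entering arc of `B`, and every vertex of `VT` is reachable from `r`
using arcs of `B`. -/
def IsArbOn (tl hd : A → V) (B : Set A) (r : V) (VT : Set V) : Prop :=
  r ∈ VT ∧ (∀ a ∈ B, tl a ∈ VT ∧ hd a ∈ VT) ∧ (∀ a ∈ B, hd a ≠ r) ∧
  (∀ v ∈ VT, v ≠ r → ∃! a, a ∈ B ∧ hd a = v) ∧
  (∀ v ∈ VT, Relation.ReflTransGen (fun x y => ∃ a ∈ B, tl a = x ∧ hd a = y) r v)

/-- A matroid on `S`, presented by its rank function. -/
structure RankFn (S : Type) where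
  r : Set S → ℕ
  mono : ∀ {X Y : Set S}, X ⊆ Y → r X ≤ r Y
  submodular : ∀ X Y : Set S, r (X ∪ Y) + r (X ∩ Y) ≤ r X + r Y
  le_ncard : ∀ X : Set S, r X ≤ X.ncard
  rank_empty : r ∅ = 0

/-- Independence in a matroid given by its rank function. -/
def RankFn.Indep (M : RankFn S) (X : Set S) : Prop := M.r X = X.ncard

/-- `π` is `M`-independent: the multiset of roots placed at each vertex is independent. -/
def MIndep (M : RankFn S) (π : S → V) : Prop := ∀ v : V, M.Indep (π ⁻¹' {v})

/-- `C` is the vertex set of a strong component of the mixed graph. -/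
def IsStrongComp (tl hd : A → V) (e1 e2 : E → V) (C : Set V) : Prop :=
  C.Nonempty ∧ (∀ u ∈ C, ∀ v ∈ C, mreach tl hd e1 e2 u v) ∧
  (∀ v : V, (∃ u ∈ C, mreach tl hd e1 e2 u v ∧ mreach tl hd e1 e2 v u) → v ∈ C)

/-- Number of undirected edges joining two distinct parts of the subpartition `P`,
or joining a part of `P` to the complement of the union of the parts. -/
noncomputable def eP {t : ℕ} (e1 e2 : E → V) (P : Fin t → Set V) : ℕ :=
  {e | (∃ q, e1 e ∈ P q ∨ e2 e ∈ P q) ∧ ¬ ∃ q, e1 e ∈ P q ∧ e2 e ∈ P q}.ncard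

/-- Tail map of the digraph obtained by keeping all arcs and orienting each edge by `o`. -/
def ctl (tl : A → V) (e1 e2 : E → V) (o : E → Bool) : A ⊕ E → V
  | .inl a => tl a
  | .inr e => if o e then e1 e else e2 e

/-- Head map of the digraph obtained by keeping all arcs and orienting each edge by `o`. -/
def chd (hd : A → V) (e1 e2 : E → V) (o : E → Bool) : A ⊕ E → V
  | .inl a => hd a
  | .inr e => if o e then e2 e else e1 e

/-- Existence of a maximal `M`-independent packing of mixed arborescences in
`(F = (V; E, A), M, S, π)`: there is an orientation of the undirected edges and
pairwise edge- and arc-disjoint arborescences `T_s` rooted at `π s`, such that at each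
vertex `v` the set of indices `s` with `v ∈ V(T_s)` is independent in `M` and has
cardinality `r_M(S_{W(v)})` (with `W` the mixed-reachability closure). -/
def MaxIndMixedPacking (tl hd : A → V) (e1 e2 : E → V) (M : RankFn S) (π : S → V) : Prop :=
  ∃ (o : E → Bool) (B : S → Set (A ⊕ E)) (VT : S → Set V),
    (∀ s s' : S, s ≠ s' → Disjoint (B s) (B s')) ∧
    (∀ s, IsArbOn (ctl tl e1 e2 o) (chd hd e1 e2 o) (B s) (π s) (VT s)) ∧
    (∀ v : V, M.Indep {s | v ∈ VT s} ∧
      ({s | v ∈ VT s}).ncard = M.r (π ⁻¹' Wset tl hd e1 e2 {v}))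

/-- The function `f_C` from Theorem (iii):
`f_C(X) = max { r_M(S_{W(V(C))}) − r_M(S_{X₀}) − d_A^-(X₀) :
X ⊆ X₀, X₀ \ X = W(Y) for some Y ⊆ W(V(C)) \ V(C) }`. -/
noncomputable def fC (tl hd : A → V) (e1 e2 : E → V) (M : RankFn S) (π : S → V)
    (C : Set V) (X : Set V) : ℤ :=
  sSup {z : ℤ | ∃ X0 : Set V, X ⊆ X0 ∧
    (∃ Y ⊆ Wset tl hd e1 e2 C \ C, X0 \ X = Wset tl hd e1 e2 Y) ∧
    z = (M.r (π ⁻¹' Wset tl hd e1 e2 C) : ℤ) - M.r (π ⁻¹' X0) - din tl hd X0}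

end Defs

/-!
Lovász's proof. Grow the arborescence of the first root arc by arc, keeping the cut condition
for the other roots in the unused arcs. While the tree spans `S ≠ V`, take an inclusion-minimal
tight set `X` (unused in-degree equal to the number of other roots outside it) meeting `V \ S`.
Counting shows that an unused arc goes from `X ∩ S` into `X \ S`; by submodularity of the
in-degree, tight sets are closed under intersection, so by minimality of `X` this arc enters no
tight set and may be used. Recursing on the other roots gives the packing. Conversely, each root
outside `X` has its own arborescence enter `X` through an arc of its own.
-/

open Function Relation

section ArborescencePacking

variable {V A ι : Type} (tl hd : A → V)

noncomputable def dinOn (D : Set A) (X : Set V) : ℕ :=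
  {a | a ∈ D ∧ tl a ∉ X ∧ hd a ∈ X}.ncard

def CutCondition (D : Set A) (r : ι → V) : Prop :=
  ∀ X : Set V, X.Nonempty → {i | r i ∉ X}.ncard ≤ dinOn tl hd D X

def IsTight (D : Set A) (r : ι → V) (X : Set V) : Prop :=
  X.Nonempty ∧ dinOn tl hd D X = {i | r i ∉ X}.ncard

lemma din_eq_dinOn_univ (X : Set V) : din tl hd X = dinOn tl hd univ X := by
  simp [din, dinOn]

variable {tl hd}

lemma ncard_setOf_fin_succ {k : ℕ} (P : Fin (k + 1) → Prop) [DecidablePred P] :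
    {i | P i}.ncard = {i : Fin k | P i.succ}.ncard + if P 0 then 1 else 0 := by
  simp only [ncard_eq_toFinset_card', toFinset_ofPred, Finset.card_filter, Fin.sum_univ_succ]
  omega

lemma ncard_setOf_notMem_union_add_inter [Finite ι] (r : ι → V) (X Y : Set V) :
    {i | r i ∉ X ∪ Y}.ncard + {i | r i ∉ X ∩ Y}.ncard =
      {i | r i ∉ X}.ncard + {i | r i ∉ Y}.ncard := by
  have hunion : {i | r i ∉ X ∪ Y} = {i | r i ∉ X} ∩ {i | r i ∉ Y} := by ext; simp
  have hinter : {i | r i ∉ X ∩ Y} = {i | r i ∉ X} ∪ {i | r i ∉ Y} := by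
    ext; simp [imp_iff_not_or]
  rw [hunion, hinter, ncard_inter_add_ncard_union]

lemma dinOn_union_add_dinOn_inter_le [Finite A] (D : Set A) (X Y : Set V) :
    dinOn tl hd D (X ∪ Y) + dinOn tl hd D (X ∩ Y) ≤ dinOn tl hd D X + dinOn tl hd D Y := by
  have key {s t u w : Set A} (hst : s ∪ t ⊆ u ∪ w) (hst' : s ∩ t ⊆ u ∩ w) :
      s.ncard + t.ncard ≤ u.ncard + w.ncard := by
    rw [← ncard_union_add_ncard_inter s, ← ncard_union_add_ncard_inter u]
    exact add_le_add (ncard_le_ncard hst) (ncard_le_ncard hst')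
  unfold dinOn
  apply key <;> intro a <;> simp only [mem_union, mem_inter_iff, mem_ofPred_eq] <;> tauto

lemma dinOn_le_dinOn_of_subset [Finite A] {D : Set A} {X Y : Set V} (hYX : Y ⊆ X)
    (hno : ∀ a ∈ D, tl a ∈ X \ Y → hd a ∉ Y) : dinOn tl hd D Y ≤ dinOn tl hd D X :=
  ncard_le_ncard fun a ⟨haD, hta, hha⟩ =>
    ⟨haD, fun htX => hno a haD ⟨htX, hta⟩ hha, hYX hha⟩

lemma dinOn_diff_eq_of_disjoint {A' B : Set A} {S Y : Set V} (hB : ∀ a ∈ B, hd a ∈ S)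
    (hYS : Disjoint Y S) : dinOn tl hd (A' \ B) Y = dinOn tl hd A' Y := by
  unfold dinOn
  congr 1
  ext a
  simp only [mem_ofPred_eq, mem_sdiff, and_congr_left_iff, and_iff_left_iff_imp]
  exact fun ⟨_, hha⟩ _ haB => hYS.notMem_of_mem_left hha (hB a haB)

lemma CutCondition.tail {k : ℕ} {D : Set A} {r : Fin (k + 1) → V}
    (h : CutCondition tl hd D r) : CutCondition tl hd D (Fin.tail r) := by
  classical
  intro X hX
  have := ncard_setOf_fin_succ (fun i => r i ∉ X)
  exact le_trans (by unfold Fin.tail; omega) (h X hX)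

lemma CutCondition.isTight_inter [Finite A] [Finite ι] {D : Set A} {r : ι → V} {X Y : Set V}
    (h : CutCondition tl hd D r) (hX : IsTight tl hd D r X) (hY : IsTight tl hd D r Y)
    (hXY : (X ∩ Y).Nonempty) : IsTight tl hd D r (X ∩ Y) := by
  refine ⟨hXY, le_antisymm ?_ (h _ hXY)⟩
  have hunion := h (X ∪ Y) (hX.1.mono subset_union_left)
  have hsubmod := dinOn_union_add_dinOn_inter_le (tl := tl) (hd := hd) D X Y
  have hmod := ncard_setOf_notMem_union_add_inter r X Y
  have hXtight := hX.2
  have hYtight := hY.2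
  omega

lemma CutCondition.diff_singleton [Finite A] {D : Set A} {r : ι → V} {a : A}
    (h : CutCondition tl hd D r) (ha : ∀ X, IsTight tl hd D r X → hd a ∈ X → tl a ∈ X) :
    CutCondition tl hd (D \ {a}) r := by
  intro X hX
  by_cases htight : IsTight tl hd D r X
  · have hsame : dinOn tl hd (D \ {a}) X = dinOn tl hd D X := by
      unfold dinOn
      congr 1
      ext b
      simp only [mem_ofPred_eq, mem_sdiff, mem_singleton_iff]
      constructor
      · exact fun ⟨⟨hbD, _⟩, hb⟩ => ⟨hbD, hb⟩
      · rintro ⟨hbD, hb⟩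
        refine ⟨⟨hbD, ?_⟩, hb⟩
        rintro rfl
        exact hb.1 (ha X htight hb.2)
    exact hsame ▸ h X hX
  · have hlt : {i | r i ∉ X}.ncard < dinOn tl hd D X :=
      lt_of_le_of_ne (h X hX) fun heq => htight ⟨hX, heq.symm⟩
    have hdrop : dinOn tl hd D X ≤ dinOn tl hd (D \ {a}) X + 1 := by
      refine le_trans (ncard_le_ncard (t := insert a _) ?_) (ncard_insert_le _ _)
      rintro b ⟨hbD, hb⟩
      by_cases hba : b = a
      · exact Or.inl hba
      · exact Or.inr ⟨⟨hbD, hba⟩, hb⟩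
    omega

lemma exists_arc_entering_of_reflTransGen {B : Set A} {X : Set V} {u v : V}
    (h : ReflTransGen (fun x y => ∃ a ∈ B, tl a = x ∧ hd a = y) u v) (hu : u ∉ X)
    (hv : v ∈ X) : ∃ a ∈ B, tl a ∉ X ∧ hd a ∈ X := by
  induction h with
  | refl => exact absurd hv hu
  | tail _ hstep ih =>
    obtain ⟨a, haB, rfl, rfl⟩ := hstep
    by_cases hta : tl a ∈ X
    · exact ih hta
    · exact ⟨a, haB, hta, hv⟩

lemma isArbOn_empty_singleton (r : V) : IsArbOn tl hd ∅ r {r} :=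
  ⟨rfl, by simp, by simp, fun _ hv hne => absurd hv hne, by rintro v rfl; exact .refl⟩

lemma IsArbOn.insert {B : Set A} {r : V} {S : Set V} {a : A} (h : IsArbOn tl hd B r S)
    (hta : tl a ∈ S) (hha : hd a ∉ S) : IsArbOn tl hd (insert a B) r (insert (hd a) S) := by
  obtain ⟨hrS, hBS, hnr, huniq, hreach⟩ := h
  refine ⟨Or.inr hrS, ?_, ?_, ?_, ?_⟩
  · rintro b (rfl | hbB)
    · exact ⟨Or.inr hta, Or.inl rfl⟩
    · exact ⟨Or.inr (hBS b hbB).1, Or.inr (hBS b hbB).2⟩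
  · rintro b (rfl | hbB)
    · exact fun h => hha (h ▸ hrS)
    · exact hnr b hbB
  · rintro v (rfl | hvS) hvr
    · refine ⟨a, ⟨Or.inl rfl, rfl⟩, ?_⟩
      rintro b ⟨rfl | hbB, hb⟩
      · rfl
      · exact absurd (hb ▸ (hBS b hbB).2) hha
    · obtain ⟨b, ⟨hbB, hb⟩, hbuniq⟩ := huniq v hvS hvr
      refine ⟨b, ⟨Or.inr hbB, hb⟩, ?_⟩
      rintro c ⟨rfl | hcB, hc⟩
      · exact absurd (hc ▸ hvS) hha
      · exact hbuniq c ⟨hcB, hc⟩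
  -- `Insert.insert`, since inside this proof `insert` would resolve to `IsArbOn.insert`
  · have hlift : ∀ v ∈ S,
        ReflTransGen (fun x y => ∃ b ∈ Insert.insert a B, tl b = x ∧ hd b = y) r v :=
      fun v hv => ReflTransGen.mono (fun _ _ ⟨b, hb, hbe⟩ => ⟨b, Or.inr hb, hbe⟩) _ _ (hreach v hv)
    rintro v (rfl | hvS)
    · exact (hlift _ hta).tail ⟨a, Or.inl rfl, rfl, rfl⟩
    · exact hlift v hvS

lemma exists_arc_into_diff_of_isTight [Finite A] {k : ℕ} {A' B : Set A} {r : Fin (k + 1) → V}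
    {S X : Set V} (hcond : CutCondition tl hd A' r) (hB : IsArbOn tl hd B (r 0) S)
    (hX : IsTight tl hd (A' \ B) (Fin.tail r) X) (hXS : (X \ S).Nonempty) :
    ∃ a ∈ A' \ B, tl a ∈ X ∩ S ∧ hd a ∈ X \ S := by
  classical
  by_contra! hno
  have hroot₀ : r 0 ∉ X \ S := fun h => h.2 hB.1
  have hcount : {i : Fin k | r i.succ ∉ X \ S}.ncard + 1 ≤
      {i : Fin k | r i.succ ∉ X \ S}.ncard := calc
    _ = {i | r i ∉ X \ S}.ncard := by rw [ncard_setOf_fin_succ, if_pos hroot₀]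
    _ ≤ dinOn tl hd A' (X \ S) := hcond _ hXS
    _ = dinOn tl hd (A' \ B) (X \ S) :=
      (dinOn_diff_eq_of_disjoint (fun a ha => (hB.2.1 a ha).2) disjoint_sdiff_left).symm
    _ ≤ dinOn tl hd (A' \ B) X := dinOn_le_dinOn_of_subset sdiff_subset fun a ha h =>
      hno a ha (by rwa [sdiff_sdiff_right_self] at h)
    _ = {i : Fin k | r i.succ ∉ X}.ncard := hX.2
    _ ≤ {i : Fin k | r i.succ ∉ X \ S}.ncard := ncard_le_ncard fun i hi h => hi h.1
  omega

lemma exists_isArbOn_insert_cutCondition [Finite V] [Finite A] {k : ℕ} {A' B : Set A}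
    {r : Fin (k + 1) → V} {S : Set V} (hcond : CutCondition tl hd A' r) (hS : S ≠ univ)
    (hB : IsArbOn tl hd B (r 0) S) (hinv : CutCondition tl hd (A' \ B) (Fin.tail r)) :
    ∃ a ∈ A' \ B, hd a ∉ S ∧ IsArbOn tl hd (insert a B) (r 0) (insert (hd a) S) ∧
      CutCondition tl hd (A' \ insert a B) (Fin.tail r) := by
  have huniv : IsTight tl hd (A' \ B) (Fin.tail r) univ := ⟨⟨r 0, trivial⟩, by simp [dinOn]⟩
  obtain ⟨X, hX⟩ := exists_minimal_of_wellFoundedLT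
    (fun Z => IsTight tl hd (A' \ B) (Fin.tail r) Z ∧ (Z \ S).Nonempty)
    ⟨univ, huniv, by simpa [← compl_eq_univ_sdiff, nonempty_compl] using hS⟩
  obtain ⟨a, haD, hta, hha⟩ := exists_arc_into_diff_of_isTight hcond hB hX.1.1 hX.1.2
  refine ⟨a, haD, hha.2, hB.insert hta.2 hha.2, ?_⟩
  rw [← union_singleton, ← sdiff_sdiff]
  -- a tight set entered by `a` would cross `X` in a smaller tight set still containing `hd a`
  refine hinv.diff_singleton fun Z hZ hhaZ => ?_
  have hXZ := hinv.isTight_inter hX.1.1 hZ ⟨hd a, hha.1, hhaZ⟩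
  have hXZX := hX.eq_of_le ⟨hXZ, hd a, ⟨hha.1, hhaZ⟩, hha.2⟩ inter_subset_left
  exact (hXZX.symm.subset hta.1).2

lemma CutCondition.exists_isArbOn_univ [Finite V] [Finite A] {k : ℕ} {A' : Set A}
    {r : Fin (k + 1) → V} (hcond : CutCondition tl hd A' r) :
    ∃ B ⊆ A', IsArbOn tl hd B (r 0) univ ∧ CutCondition tl hd (A' \ B) (Fin.tail r) := by
  refine WellFoundedGT.induction_top
    (P := fun S => ∃ B ⊆ A', IsArbOn tl hd B (r 0) S ∧ CutCondition tl hd (A' \ B) (Fin.tail r))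
    ⟨{r 0}, ∅, empty_subset _, isArbOn_empty_singleton _, by simpa using hcond.tail⟩ ?_
  rintro S hS ⟨B, hBA, hB, hinv⟩
  obtain ⟨a, haD, hha, hB', hinv'⟩ := exists_isArbOn_insert_cutCondition hcond hS hB hinv
  exact ⟨insert (hd a) S, ssubset_insert hha, insert a B, insert_subset haD.1 hBA, hB', hinv'⟩

theorem CutCondition.exists_pairwise_disjoint_isArbOn [Finite V] [Finite A] :
    ∀ {k : ℕ} {A' : Set A} {r : Fin k → V}, CutCondition tl hd A' r →
      ∃ B : Fin k → Set A, (∀ i, B i ⊆ A') ∧ Pairwise (Disjoint on B) ∧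
        ∀ i, IsArbOn tl hd (B i) (r i) univ
  | 0, _, _, _ => ⟨finZeroElim, fun i => i.elim0, fun i => i.elim0, fun i => i.elim0⟩
  | k + 1, A', r, hcond => by
    obtain ⟨B₀, hB₀A, hB₀, hinv⟩ := hcond.exists_isArbOn_univ
    obtain ⟨B, hBA, hdisj, hB⟩ := hinv.exists_pairwise_disjoint_isArbOn
    have hB₀B : ∀ i, Disjoint B₀ (B i) :=
      fun i => disjoint_left.2 fun _ ha hb => (hBA i hb).2 ha
    refine ⟨Fin.cons B₀ B, Fin.cases hB₀A fun i => (hBA i).trans sdiff_subset, ?_,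
      Fin.cases hB₀ hB⟩
    intro i j hij
    cases i using Fin.cases <;> cases j using Fin.cases
    · exact absurd rfl hij
    · exact hB₀B _
    · exact (hB₀B _).symm
    · exact hdisj (ne_of_apply_ne Fin.succ hij)

theorem cutCondition_univ_of_pairwise_disjoint_isArbOn [Finite A] {r : ι → V} {B : ι → Set A}
    (hdisj : Pairwise (Disjoint on B)) (hB : ∀ i, IsArbOn tl hd (B i) (r i) univ) :
    CutCondition tl hd univ r := by
  rintro X ⟨x, hx⟩
  have hentry : ∀ i, r i ∉ X → ∃ a ∈ B i, tl a ∉ X ∧ hd a ∈ X := fun i hi =>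
    exists_arc_entering_of_reflTransGen ((hB i).2.2.2.2 x trivial) hi hx
  choose f hfB hf using hentry
  rw [dinOn, ← Nat.card_coe_set_eq, ← Nat.card_coe_set_eq]
  refine Nat.card_le_card_of_injective (fun i => ⟨f i i.2, trivial, hf i i.2⟩) ?_
  rintro ⟨i, hi⟩ ⟨j, hj⟩ hij
  have hfij : f i hi = f j hj := congrArg Subtype.val hij
  by_contra hne
  exact disjoint_left.1 (hdisj fun h => hne (Subtype.ext h)) (hfB i hi) (hfij ▸ hfB j hj)

end ArborescencePacking

theorem edmonds_arborescence_packing_general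
    {V A : Type} [Fintype V] [Fintype A]
    (tl hd : A → V)
    (k : ℕ) (r : Fin k → V) :
    (∃ B : Fin k → Set A,
      (∀ i j, i ≠ j → Disjoint (B i) (B j)) ∧
      ∀ i, IsArbOn tl hd (B i) (r i) Set.univ) ↔
    (∀ X : Set V, X.Nonempty → ({i | r i ∉ X}).ncard ≤ din tl hd X) := by
  simp only [din_eq_dinOn_univ]
  constructor
  · rintro ⟨B, hdisj, hB⟩
    exact cutCondition_univ_of_pairwise_disjoint_isArbOn hdisj hB
  · intro hcond
    obtain ⟨B, -, hdisj, hB⟩ := CutCondition.exists_pairwise_disjoint_isArbOn hcond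
    exact ⟨B, hdisj, hB⟩

/-- **Edmonds' arborescence packing theorem.** In a digraph `D = (V,A)` with a multiset of
roots `r 0, …, r (k-1)`, there exist pairwise arc-disjoint spanning `r i`-arborescences
iff every nonempty `X ⊆ V` has in-degree at least the number of roots outside `X`. -/
theorem edmonds_arborescence_packing
    {V A : Type} [Fintype V] [Fintype A] [DecidableEq V]
    (tl hd : A → V) (hloopless : ∀ a, tl a ≠ hd a)
    (k : ℕ) (r : Fin k → V) :
    (∃ B : Fin k → Set A,
      (∀ i j, i ≠ j → Disjoint (B i) (B j)) ∧
      ∀ i, IsArbOn tl hd (B i) (r i) Set.univ) ↔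
    (∀ X : Set V, X.Nonempty → ({i | r i ∉ X}).ncard ≤ din tl hd X) :=
  edmonds_arborescence_packing_general tl hd k r
end

section
/- In a digraph D = (V,A) with a multiset R = {r_1, ..., r_k} ⊆ V, there exist pairwise arc-disjoint maximal r_i-arborescences (i = 1,...,k) if and only if for every nonempty X ⊆ V, d_A^-(X) ≥ |{r_i : r_i ∈ W(X) \ X}|, where W(X) = X ∪ {v ∈ V \ X : X is reachable from v}. -/
open Set

/-!
Necessity: the arborescence of a root in `W(X) \ X` must enter `X`, and the arborescences are
arc-disjoint. Sufficiency is Lovász's tree-growing argument, run for trees that start on root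
sets `Z i` and must span arc-closed sets `U i`. The cut condition "at most `d⁻(X)` trees still
have to enter `X`" survives moving an arc `a` into tree `t` unless `a` enters a tight set meeting
`Z t`. If every candidate arc were blocked like this, take an inclusion-minimal blocking set `Y`.
Removing arc-closed sets from a tight set keeps it tight, so every tree that `Y` demands reaches
the head of the blocked arc; this yields a second candidate arc inside `Y`, and uncrossing `Y`
with a set blocking that arc either violates the cut condition or gives a smaller blocking set.
-/

namespace ArborescencePacking

open Classical Function

variable {V A ι : Type*}

noncomputable def inArcs (tl hd : A → V) (A' : Finset A) (X : Set V) : Finset A :=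
  A'.filter fun a => tl a ∉ X ∧ hd a ∈ X

noncomputable def indeg (tl hd : A → V) (A' : Finset A) (X : Set V) : ℕ :=
  (inArcs tl hd A' X).card

def IsOutClosed (tl hd : A → V) (A' : Finset A) (S : Set V) : Prop :=
  ∀ a ∈ A', tl a ∈ S → hd a ∈ S

/-- Tree `i` has already been grown on `Z i` and has to span `U i`; it is demanded by `X`
when it still has to enter `X`. -/
noncomputable def demands [Fintype ι] (Z U : ι → Set V) (X : Set V) : Finset ι :=
  Finset.univ.filter fun i => Disjoint X (Z i) ∧ (X ∩ U i).Nonempty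

def CutCondition [Fintype ι] (tl hd : A → V) (A' : Finset A) (Z U : ι → Set V) : Prop :=
  ∀ X : Set V, X.Nonempty → (demands Z U X).card ≤ indeg tl hd A' X

def IsTight [Fintype ι] (tl hd : A → V) (A' : Finset A) (Z U : ι → Set V) (X : Set V) : Prop :=
  indeg tl hd A' X = (demands Z U X).card

def IsCandidate (tl hd : A → V) (A' : Finset A) (Z U : ι → Set V) (t : ι) (a : A) : Prop :=
  a ∈ A' ∧ tl a ∈ Z t ∧ hd a ∈ U t \ Z t

/-- Moving `a` into tree `t` can break the cut condition only at a set blocking it. -/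
def Blocks [Fintype ι] (tl hd : A → V) (A' : Finset A) (Z U : ι → Set V) (X : Set V) (t : ι)
    (a : A) : Prop :=
  IsTight tl hd A' Z U X ∧ hd a ∈ X ∧ tl a ∉ X ∧ ¬ Disjoint X (Z t)

section Counting

variable {tl hd : A → V} {A' : Finset A}

@[simp]
lemma mem_inArcs {a : A} {X : Set V} : a ∈ inArcs tl hd A' X ↔ a ∈ A' ∧ tl a ∉ X ∧ hd a ∈ X :=
  Finset.mem_filter

lemma inArcs_erase (a : A) (X : Set V) :
    inArcs tl hd (A'.erase a) X = (inArcs tl hd A' X).erase a := by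
  ext b
  simp only [mem_inArcs, Finset.mem_erase]
  tauto

lemma indeg_union_add_indeg_inter_le (X Y : Set V) :
    indeg tl hd A' (X ∪ Y) + indeg tl hd A' (X ∩ Y) ≤ indeg tl hd A' X + indeg tl hd A' Y := by
  simp only [indeg, inArcs, Finset.card_filter, ← Finset.sum_add_distrib]
  refine Finset.sum_le_sum fun a _ => ?_
  by_cases hx : tl a ∈ X <;> by_cases hy : tl a ∈ Y <;>
    by_cases gx : hd a ∈ X <;> by_cases gy : hd a ∈ Y <;> simp [hx, hy, gx, gy]

lemma indeg_diff_le (Y W : Set V) :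
    indeg tl hd A' (Y \ W) ≤
      indeg tl hd A' Y + (A'.filter fun a => tl a ∈ Y ∩ W ∧ hd a ∈ Y \ W).card := by
  simp only [indeg, inArcs, Finset.card_filter, ← Finset.sum_add_distrib]
  refine Finset.sum_le_sum fun a _ => ?_
  by_cases h1 : tl a ∈ Y <;> by_cases h2 : tl a ∈ W <;> by_cases h3 : hd a ∈ Y <;>
    by_cases h4 : hd a ∈ W <;> simp [h1, h2, h3, h4]

lemma IsOutClosed.mono {A'' : Finset A} {S : Set V} (hS : IsOutClosed tl hd A' S)
    (h : A'' ⊆ A') : IsOutClosed tl hd A'' S :=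
  fun a ha => hS a (h ha)

lemma inArcs_diff {S : Set V} (hS : IsOutClosed tl hd A' S) (T : Set V) :
    inArcs tl hd A' (T \ S) = (inArcs tl hd A' T).filter fun a => hd a ∉ S := by
  ext a
  simp only [mem_inArcs, Finset.mem_filter, Set.mem_sdiff]
  constructor
  · rintro ⟨ha, htl, hhdT, hhdS⟩
    exact ⟨⟨ha, fun htlT => htl ⟨htlT, fun htlS => hhdS (hS a ha htlS)⟩, hhdT⟩, hhdS⟩
  · rintro ⟨⟨ha, htl, hhdT⟩, hhdS⟩
    exact ⟨ha, fun h => htl h.1, hhdT, hhdS⟩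

end Counting

section Demands

variable [Fintype ι] {Z Z' U : ι → Set V} {X Y : Set V} {t : ι}

@[simp]
lemma mem_demands : t ∈ demands Z U X ↔ Disjoint X (Z t) ∧ (X ∩ U t).Nonempty := by
  simp [demands]

lemma not_mem_demands (h : ¬ Disjoint X (Z t)) : t ∉ demands Z U X :=
  fun ht => h (mem_demands.1 ht).1

lemma not_disjoint_of_demands_subset {X' : Set V} (h : ¬ Disjoint X (Z t))
    (hdem : demands Z U X' ⊆ demands Z U X) (hX' : (X' ∩ U t).Nonempty) :
    ¬ Disjoint X' (Z t) :=
  fun hdisj => not_mem_demands h (hdem (mem_demands.2 ⟨hdisj, hX'⟩))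

lemma demands_anti (h : ∀ i, Z i ⊆ Z' i) : demands Z' U X ⊆ demands Z U X := by
  intro i hi
  rw [mem_demands] at hi ⊢
  exact ⟨hi.1.mono_right (h i), hi.2⟩

lemma demands_inter_subset_demands_union :
    demands Z U X ∩ demands Z U Y ⊆ demands Z U (X ∪ Y) := by
  intro m hm
  simp only [Finset.mem_inter, mem_demands] at hm ⊢
  exact ⟨Disjoint.union_left hm.1.1 hm.2.1, hm.1.2.mono (by gcongr; exact Set.subset_union_left)⟩

lemma demands_union_subset_demands_inter
    (h : ∀ m ∈ demands Z U X ∪ demands Z U Y, (X ∩ Y ∩ U m).Nonempty) :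
    demands Z U X ∪ demands Z U Y ⊆ demands Z U (X ∩ Y) := by
  intro m hm
  refine mem_demands.2 ⟨?_, h m hm⟩
  rcases Finset.mem_union.1 hm with hm | hm
  · exact (mem_demands.1 hm).1.mono_left Set.inter_subset_left
  · exact (mem_demands.1 hm).1.mono_left Set.inter_subset_right

end Demands

section Tight

variable [Fintype ι] {tl hd : A → V} {A' : Finset A} {Z U : ι → Set V} {X Y T S b : Set V}

lemma IsTight.inter (hcut : CutCondition tl hd A' Z U) (hX : IsTight tl hd A' Z U X)
    (hY : IsTight tl hd A' Z U Y) (hXY : (X ∩ Y).Nonempty)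
    (hmeet : ∀ m ∈ demands Z U X ∪ demands Z U Y, (X ∩ Y ∩ U m).Nonempty) :
    IsTight tl hd A' Z U (X ∩ Y) ∧ demands Z U (X ∩ Y) ⊆ demands Z U X ∪ demands Z U Y := by
  have hsub := demands_union_subset_demands_inter hmeet
  have h₁ := Finset.card_le_card hsub
  have h₂ := Finset.card_le_card (demands_inter_subset_demands_union (Z := Z) (U := U)
    (X := X) (Y := Y))
  have h₃ := Finset.card_union_add_card_inter (demands Z U X) (demands Z U Y)
  have h₄ := indeg_union_add_indeg_inter_le (tl := tl) (hd := hd) (A' := A') X Y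
  have h₅ := hcut (X ∪ Y) (hXY.mono (Set.inter_subset_left.trans Set.subset_union_left))
  have h₆ := hcut _ hXY
  unfold IsTight at hX hY ⊢
  exact ⟨by omega, (Finset.eq_of_subset_of_card_le hsub (by omega)).ge⟩

/-- The demands `m` in question are demands of the complement `Q` of `⋃ m, U m \ T`, and every
arc entering `Q` enters `T` with head in `S`. -/
lemma card_demands_covered_le (hcut : CutCondition tl hd A' Z U)
    (hU : ∀ i, IsOutClosed tl hd A' (U i)) (hZU : ∀ i, Z i ⊆ U i) (hT : T.Nonempty) :
    ((demands Z U T).filter fun m => U m ∩ T ⊆ S).card ≤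
      ((inArcs tl hd A' T).filter fun a => hd a ∈ S).card := by
  set M := (demands Z U T).filter fun m => U m ∩ T ⊆ S
  set Q : Set V := ((⋃ m ∈ M, U m) \ T)ᶜ
  have hTQ : T ⊆ Q := fun w hw hw' => hw'.2 hw
  have hMQ : M ⊆ demands Z U Q := by
    intro m hm
    have hmT := mem_demands.1 (Finset.mem_filter.1 hm).1
    refine mem_demands.2 ⟨Set.disjoint_left.2 fun w hwQ hwZ => ?_, hmT.2.mono (by gcongr)⟩
    have hwT : w ∈ T := by_contra fun hwT => hwQ ⟨Set.mem_biUnion hm (hZU m hwZ), hwT⟩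
    exact Set.disjoint_left.1 hmT.1 hwT hwZ
  have hQ : inArcs tl hd A' Q ⊆ (inArcs tl hd A' T).filter fun a => hd a ∈ S := by
    intro a ha
    obtain ⟨haA, htlQ, hhdQ⟩ := mem_inArcs.1 ha
    obtain ⟨htlM, htlT⟩ : tl a ∈ (⋃ m ∈ M, U m) \ T := not_not.1 htlQ
    obtain ⟨m, hm, htlU⟩ := Set.mem_iUnion₂.1 htlM
    have hhdU := hU m a haA htlU
    have hhdT : hd a ∈ T := by_contra fun hhdT => hhdQ ⟨Set.mem_biUnion hm hhdU, hhdT⟩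
    exact Finset.mem_filter.2 ⟨mem_inArcs.2 ⟨haA, htlT, hhdT⟩,
      (Finset.mem_filter.1 hm).2 ⟨hhdU, hhdT⟩⟩
  calc M.card ≤ (demands Z U Q).card := Finset.card_le_card hMQ
    _ ≤ indeg tl hd A' Q := hcut Q (hT.mono hTQ)
    _ ≤ _ := Finset.card_le_card hQ

lemma IsTight.diff (hcut : CutCondition tl hd A' Z U) (hU : ∀ i, IsOutClosed tl hd A' (U i))
    (hZU : ∀ i, Z i ⊆ U i) (hT : IsTight tl hd A' Z U T) (hS : IsOutClosed tl hd A' S)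
    (hne : (T \ S).Nonempty) :
    IsTight tl hd A' Z U (T \ S) ∧ demands Z U (T \ S) ⊆ demands Z U T := by
  set M := (demands Z U T).filter fun m => U m ∩ T ⊆ S
  have hrest : demands Z U T \ M ⊆ demands Z U (T \ S) := by
    intro m hm
    obtain ⟨hmT, hmM⟩ := Finset.mem_sdiff.1 hm
    have hmT' := mem_demands.1 hmT
    obtain ⟨w, ⟨hwU, hwT⟩, hwS⟩ := Set.not_subset.1 fun h => hmM (Finset.mem_filter.2 ⟨hmT, h⟩)
    exact mem_demands.2 ⟨hmT'.1.mono_left Set.sdiff_subset, w, ⟨hwT, hwS⟩, hwU⟩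
  have h₁ := Finset.card_le_card hrest
  have h₂ : (demands Z U T \ M).card + M.card = (demands Z U T).card :=
    Finset.card_sdiff_add_card_eq_card (Finset.filter_subset _ _)
  have h₃ : M.card ≤ ((inArcs tl hd A' T).filter fun a => hd a ∈ S).card :=
    card_demands_covered_le hcut hU hZU (hne.mono Set.sdiff_subset)
  have h₄ := Finset.card_filter_add_card_filter_not (s := inArcs tl hd A' T) (fun a => hd a ∈ S)
  have h₅ := hcut _ hne
  have h₆ : indeg tl hd A' (T \ S) = _ := congrArg Finset.card (inArcs_diff hS T)
  unfold IsTight indeg at hT h₅ h₆ ⊢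
  refine ⟨by omega, fun m hm => ?_⟩
  have := Finset.eq_of_subset_of_card_le hrest (by omega)
  exact Finset.sdiff_subset (this ▸ hm)

lemma IsTight.exists_subset_demands_meet (hcut : CutCondition tl hd A' Z U)
    (hU : ∀ i, IsOutClosed tl hd A' (U i)) (hZU : ∀ i, Z i ⊆ U i) (hT : IsTight tl hd A' Z U T)
    (hbT : b ⊆ T) (hb : b.Nonempty) :
    ∃ T' ⊆ T, IsTight tl hd A' Z U T' ∧ b ⊆ T' ∧ demands Z U T' ⊆ demands Z U T ∧
      ∀ m ∈ demands Z U T', (b ∩ U m).Nonempty := by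
  set S := ⋃ (m) (_ : Disjoint b (U m)), U m
  have hS : IsOutClosed tl hd A' S := by
    intro a ha htl
    obtain ⟨m, hm, htlU⟩ := Set.mem_iUnion₂.1 htl
    exact Set.mem_biUnion hm (hU m a ha htlU)
  have hbS : b ⊆ T \ S := fun w hw => ⟨hbT hw, fun hwS => by
    obtain ⟨m, hm, hwU⟩ := Set.mem_iUnion₂.1 hwS
    exact Set.disjoint_left.1 hm hw hwU⟩
  obtain ⟨htight, hdem⟩ := hT.diff hcut hU hZU hS (hb.mono hbS)
  refine ⟨T \ S, Set.sdiff_subset, htight, hbS, hdem, fun m hm => ?_⟩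
  rw [← Set.not_disjoint_iff_nonempty_inter]
  intro hbm
  obtain ⟨w, ⟨-, hwS⟩, hwU⟩ := (mem_demands.1 hm).2
  exact hwS (Set.mem_biUnion hbm hwU)

end Tight

section Candidates

variable [Fintype ι] {tl hd : A → V} {A' : Finset A} {Z U : ι → Set V} {Y : Set V} {t : ι}
  {a e : A}

lemma exists_candidate (hcut : CutCondition tl hd A' Z U) (hU : ∀ i, IsOutClosed tl hd A' (U i))
    (hZU : ∀ i, Z i ⊆ U i) (ht : ¬ U t ⊆ Z t) : ∃ a, IsCandidate tl hd A' Z U t a := by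
  obtain ⟨v, hvU, hvZ⟩ := Set.not_subset.1 ht
  have hdem : t ∈ demands Z U (Z t)ᶜ := mem_demands.2 ⟨disjoint_compl_left, v, hvZ, hvU⟩
  obtain ⟨a, ha⟩ := Finset.card_pos.1 <|
    (Finset.card_pos.2 ⟨t, hdem⟩).trans_le (hcut _ ⟨v, hvZ⟩)
  obtain ⟨haA, htl, hhd⟩ := mem_inArcs.1 ha
  rw [Set.notMem_compl_iff] at htl
  exact ⟨a, haA, htl, hU t a haA (hZU t htl), hhd⟩

lemma CutCondition.update (hcut : CutCondition tl hd A' Z U)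
    (ha : IsCandidate tl hd A' Z U t a) (hfree : ∀ X, ¬ Blocks tl hd A' Z U X t a) :
    CutCondition tl hd (A'.erase a) (Function.update Z t (insert (hd a) (Z t))) U := by
  intro X hX
  set Z' := Function.update Z t (insert (hd a) (Z t))
  have hZZ' : ∀ i, Z i ⊆ Z' i := by
    intro i
    rcases eq_or_ne i t with rfl | hi
    · simp [Z']
    · simp [Z', hi]
  have hsub := demands_anti (U := U) (X := X) hZZ'
  have hcutX := hcut X hX
  by_cases hent : a ∈ inArcs tl hd A' X
  · have hdeg : indeg tl hd (A'.erase a) X + 1 = indeg tl hd A' X := by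
      rw [indeg, inArcs_erase]
      exact Finset.card_erase_add_one hent
    obtain ⟨-, htl, hhd⟩ := mem_inArcs.1 hent
    by_cases hdisj : Disjoint X (Z t)
    · have ht : t ∈ demands Z U X := mem_demands.2 ⟨hdisj, hd a, hhd, ha.2.2.1⟩
      have ht' : t ∉ demands Z' U X := fun h =>
        Set.disjoint_left.1 (mem_demands.1 h).1 hhd (by simp [Z'])
      have h₁ := Finset.card_le_card (show demands Z' U X ⊆ (demands Z U X).erase t from
        fun i hi => Finset.mem_erase.2 ⟨ne_of_mem_of_not_mem hi ht', hsub hi⟩)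
      have h₂ := Finset.card_erase_add_one ht
      omega
    · have hnot : ¬ IsTight tl hd A' Z U X := fun h => hfree X ⟨h, hhd, htl, hdisj⟩
      have h₁ := Finset.card_le_card hsub
      unfold IsTight at hnot
      omega
  · rw [indeg, inArcs_erase, Finset.erase_eq_of_notMem hent]
    exact (Finset.card_le_card hsub).trans hcutX

lemma head_mem_of_minimal (hcut : CutCondition tl hd A' Z U)
    (hU : ∀ i, IsOutClosed tl hd A' (U i)) (hZU : ∀ i, Z i ⊆ U i)
    (hY : Minimal (fun X => ∃ a, IsCandidate tl hd A' Z U t a ∧ Blocks tl hd A' Z U X t a) Y)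
    (ha : IsCandidate tl hd A' Z U t a) (hYa : Blocks tl hd A' Z U Y t a) :
    ∀ m ∈ demands Z U Y, hd a ∈ U m := by
  obtain ⟨Y', hY'Y, htight, hv, hdem, hmeet⟩ := hYa.1.exists_subset_demands_meet hcut hU hZU
    (Set.singleton_subset_iff.2 hYa.2.1) (Set.singleton_nonempty _)
  have hblocks : Blocks tl hd A' Z U Y' t a :=
    ⟨htight, hv rfl, fun h => hYa.2.2.1 (hY'Y h),
      not_disjoint_of_demands_subset hYa.2.2.2 hdem ⟨hd a, hv rfl, ha.2.2.1⟩⟩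
  rw [← hY.eq_of_subset ⟨a, ha, hblocks⟩ hY'Y]
  exact fun m hm => Set.singleton_inter_nonempty.1 (hmeet m hm)

lemma exists_candidate_inside (hcut : CutCondition tl hd A' Z U)
    (hU : ∀ i, IsOutClosed tl hd A' (U i)) (hZU : ∀ i, Z i ⊆ U i)
    (hY : IsTight tl hd A' Z U Y) (hYt : ¬ Disjoint Y (Z t)) {v : V} (hv : v ∈ Y \ Z t)
    (hvU : v ∈ U t) (hdem : ∀ m ∈ demands Z U Y, v ∈ U m) :
    ∃ e, IsCandidate tl hd A' Z U t e ∧ tl e ∈ Y ∧ hd e ∈ Y := by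
  have hins : insert t (demands Z U Y) ⊆ demands Z U (Y \ Z t) := by
    refine Finset.insert_subset (mem_demands.2 ⟨Set.disjoint_sdiff_left, v, hv, hvU⟩)
      fun m hm => ?_
    exact mem_demands.2 ⟨(mem_demands.1 hm).1.mono_left Set.sdiff_subset, v, hv, hdem m hm⟩
  have h₁ := Finset.card_le_card hins
  rw [Finset.card_insert_of_notMem (not_mem_demands hYt)] at h₁
  have h₂ := indeg_diff_le (tl := tl) (hd := hd) (A' := A') Y (Z t)
  have h₃ := hcut _ ⟨v, hv⟩
  unfold IsTight at hY
  obtain ⟨e, he⟩ := Finset.card_pos.1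
    (by omega : 0 < (A'.filter fun a => tl a ∈ Y ∩ Z t ∧ hd a ∈ Y \ Z t).card)
  obtain ⟨heA, ⟨htlY, htlZ⟩, hhdY, hhdZ⟩ := Finset.mem_filter.1 he
  exact ⟨e, ⟨heA, htlZ, hU t e heA (hZU t htlZ), hhdZ⟩, htlY, hhdY⟩

lemma not_blocks_of_minimal (hcut : CutCondition tl hd A' Z U)
    (hU : ∀ i, IsOutClosed tl hd A' (U i)) (hZU : ∀ i, Z i ⊆ U i)
    (hY : Minimal (fun X => ∃ a, IsCandidate tl hd A' Z U t a ∧ Blocks tl hd A' Z U X t a) Y)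
    (he : IsCandidate tl hd A' Z U t e) (htl : tl e ∈ Y) (hhd : hd e ∈ Y) (Y₂ : Set V) :
    ¬ Blocks tl hd A' Z U Y₂ t e := by
  intro hY₂
  obtain ⟨a, -, hYa⟩ := hY.prop
  have hb : hd e ∈ Y ∩ Y₂ := ⟨hhd, hY₂.2.1⟩
  obtain ⟨Y', hY'Y, hY', hbY', hdemY', hmeetY'⟩ :=
    hYa.1.exists_subset_demands_meet hcut hU hZU Set.inter_subset_left ⟨_, hb⟩
  obtain ⟨Y₂', hY₂'Y₂, hY₂', hbY₂', hdemY₂', hmeetY₂'⟩ :=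
    hY₂.1.exists_subset_demands_meet hcut hU hZU Set.inter_subset_right ⟨_, hb⟩
  have hinter : Y' ∩ Y₂' = Y ∩ Y₂ :=
    (Set.inter_subset_inter hY'Y hY₂'Y₂).antisymm (Set.subset_inter hbY' hbY₂')
  obtain ⟨htight, hdem⟩ := hY'.inter hcut hY₂' (hinter ▸ ⟨_, hb⟩) fun m hm => by
    rw [hinter]
    exact (Finset.mem_union.1 hm).elim (hmeetY' m) (hmeetY₂' m)
  rw [hinter] at htight hdem
  by_cases hdisj : Disjoint (Y ∩ Y₂) (Z t)
  · -- `Y ∩ Y₂` demands `t`, but `Y'` and `Y₂'` meet `Z t`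
    have ht := hdem (mem_demands.2 ⟨hdisj, hd e, hb, he.2.2.1⟩)
    rcases Finset.mem_union.1 ht with ht | ht
    · exact not_mem_demands (not_disjoint_of_demands_subset hYa.2.2.2 hdemY'
        ⟨hd e, hbY' hb, he.2.2.1⟩) ht
    · exact not_mem_demands (not_disjoint_of_demands_subset hY₂.2.2.2 hdemY₂'
        ⟨hd e, hbY₂' hb, he.2.2.1⟩) ht
  · -- `Y ∩ Y₂` blocks `e` and misses `tl e ∈ Y`, against the minimality of `Y`
    have hblocks : Blocks tl hd A' Z U (Y ∩ Y₂) t e :=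
      ⟨htight, hb, fun h => hY₂.2.2.1 h.2, hdisj⟩
    have hYY₂ := hY.eq_of_subset ⟨e, he, hblocks⟩ Set.inter_subset_left
    exact hY₂.2.2.1 (hYY₂ ▸ htl).2

lemma exists_unblocked_candidate [Finite V] (hcut : CutCondition tl hd A' Z U)
    (hU : ∀ i, IsOutClosed tl hd A' (U i)) (hZU : ∀ i, Z i ⊆ U i) (ht : ¬ U t ⊆ Z t) :
    ∃ a, IsCandidate tl hd A' Z U t a ∧ ∀ X, ¬ Blocks tl hd A' Z U X t a := by
  by_contra! hblocked
  obtain ⟨a₀, ha₀⟩ := exists_candidate hcut hU hZU ht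
  obtain ⟨X₀, hX₀⟩ := hblocked a₀ ha₀
  obtain ⟨Y, hY⟩ := exists_minimal_of_wellFoundedLT
    (fun X => ∃ a, IsCandidate tl hd A' Z U t a ∧ Blocks tl hd A' Z U X t a) ⟨X₀, a₀, ha₀, hX₀⟩
  obtain ⟨a, ha, hYa⟩ := hY.prop
  obtain ⟨e, he, htl, hhd⟩ := exists_candidate_inside hcut hU hZU hYa.1 hYa.2.2.2
    ⟨hYa.2.1, ha.2.2.2⟩ ha.2.2.1 (head_mem_of_minimal hcut hU hZU hY ha hYa)
  obtain ⟨Y₂, hY₂⟩ := hblocked e he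
  exact not_blocks_of_minimal hcut hU hZU hY he htl hhd Y₂ hY₂

end Candidates

def IsBranching (tl hd : A → V) (B : Set A) (Z U : Set V) : Prop :=
  (∀ a ∈ B, tl a ∈ U ∧ hd a ∈ U \ Z) ∧ (∀ v ∈ U \ Z, ∃! a, a ∈ B ∧ hd a = v) ∧
    ∀ v ∈ U, ∃ z ∈ Z, Relation.ReflTransGen (fun x y => ∃ a ∈ B, tl a = x ∧ hd a = y) z v

section Branching

variable {tl hd : A → V} {B : Set A} {Z U : Set V} {a : A}

lemma isBranching_empty (h : U ⊆ Z) : IsBranching tl hd ∅ Z U :=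
  ⟨by simp, fun v hv => (hv.2 (h hv.1)).elim, fun v hv => ⟨v, h hv, .refl⟩⟩

lemma IsBranching.insert (hB : IsBranching tl hd B (insert (hd a) Z) U) (hta : tl a ∈ Z)
    (htaU : tl a ∈ U) (hha : hd a ∈ U \ Z) : IsBranching tl hd (insert a B) Z U := by
  obtain ⟨harcs, huniq, hreach⟩ := hB
  refine ⟨?_, fun v hv => ?_, fun v hv => ?_⟩
  · rintro b (rfl | hb)
    · exact ⟨htaU, hha⟩
    · obtain ⟨htl, hhdU, hhdZ⟩ := harcs b hb
      exact ⟨htl, hhdU, fun h => hhdZ (Set.mem_insert_of_mem _ h)⟩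
  · rcases eq_or_ne v (hd a) with rfl | hva
    · refine ⟨a, ⟨Set.mem_insert _ _, rfl⟩, ?_⟩
      rintro b ⟨rfl | hb, hbv⟩
      · rfl
      · exact absurd (hbv ▸ Set.mem_insert _ _) (harcs b hb).2.2
    · obtain ⟨b, hb, hbu⟩ := huniq v ⟨hv.1, by simp [hva, hv.2]⟩
      refine ⟨b, ⟨Set.mem_insert_of_mem _ hb.1, hb.2⟩, ?_⟩
      rintro c ⟨rfl | hc, hcv⟩
      · exact absurd hcv.symm hva
      · exact hbu c ⟨hc, hcv⟩
  · obtain ⟨z, hz, hzv⟩ := hreach v hv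
    have hzv' := Relation.ReflTransGen.mono
      (p := fun x y => ∃ b ∈ Insert.insert a B, tl b = x ∧ hd b = y)
      (fun x y ⟨b, hb, hbx, hby⟩ => ⟨b, Set.mem_insert_of_mem _ hb, hbx, hby⟩) _ _ hzv
    rcases hz with rfl | hz
    · exact ⟨tl a, hta, .head ⟨a, Set.mem_insert _ _, rfl, rfl⟩ hzv'⟩
    · exact ⟨z, hz, hzv'⟩

end Branching

lemma pairwise_disjoint_update_insert [DecidableEq ι] {B : ι → Set A} {a : A}
    (hB : Pairwise (Disjoint on B)) (ha : ∀ i, a ∉ B i) (t : ι) :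
    Pairwise (Disjoint on Function.update B t (insert a (B t))) := by
  intro i j hij
  simp only [onFun, update_apply]
  split_ifs with hi hj hj
  · exact absurd (hi.trans hj.symm) hij
  · exact Set.disjoint_insert_left.2 ⟨ha j, hi ▸ hB hij⟩
  · exact Set.disjoint_insert_right.2 ⟨ha i, hj ▸ hB hij⟩
  · exact hB hij

theorem exists_branching_packing [Fintype ι] [Finite V] {tl hd : A → V} {A' : Finset A}
    {Z U : ι → Set V} (hcut : CutCondition tl hd A' Z U) (hU : ∀ i, IsOutClosed tl hd A' (U i))
    (hZU : ∀ i, Z i ⊆ U i) :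
    ∃ B : ι → Set A, (∀ i, B i ⊆ A') ∧ Pairwise (Disjoint on B) ∧
      ∀ i, IsBranching tl hd (B i) (Z i) (U i) := by
  induction A' using Finset.strongInduction generalizing Z with | H A' ih => ?_
  by_cases hdone : ∀ i, U i ⊆ Z i
  · exact ⟨fun _ => ∅, fun _ => Set.empty_subset _, fun _ _ _ => Set.empty_disjoint _,
      fun i => isBranching_empty (hdone i)⟩
  push Not at hdone
  obtain ⟨t, ht⟩ := hdone
  obtain ⟨a, ha, hfree⟩ := exists_unblocked_candidate hcut hU hZU ht
  set Z' := Function.update Z t (insert (hd a) (Z t))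
  have hZ'U : ∀ i, Z' i ⊆ U i := by
    intro i
    rcases eq_or_ne i t with rfl | hi
    · simpa [Z'] using Set.insert_subset ha.2.2.1 (hZU i)
    · simpa [Z', hi] using hZU i
  obtain ⟨B', hB'A, hB'disj, hB'⟩ := ih (A'.erase a) (Finset.erase_ssubset ha.1)
    (hcut.update ha hfree) (fun i => (hU i).mono (Finset.erase_subset a A')) hZ'U
  have haB' : ∀ i, a ∉ B' i := fun i h => by simpa using hB'A i h
  refine ⟨Function.update B' t (insert a (B' t)), fun i => ?_,
    pairwise_disjoint_update_insert hB'disj haB' t, fun i => ?_⟩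
  · rcases eq_or_ne i t with rfl | hi
    · simpa using Set.insert_subset ha.1 ((hB'A i).trans (by simp))
    · simpa [hi] using (hB'A i).trans (by simp)
  · rcases eq_or_ne i t with rfl | hi
    · have hB't := hB' i
      simp only [update_self] at hB't
      simpa using hB't.insert ha.2.1 (hZU i ha.2.1) ha.2.2
    · simpa [Z', hi] using hB' i

end ArborescencePacking

open Function in
lemma Set.ncard_le_ncard_of_pairwise_disjoint {ι α : Type*} {s : Set ι} {B : ι → Set α}
    {T : Set α} (hB : Pairwise (Disjoint on B)) (hT : T.Finite)
    (h : ∀ i ∈ s, (B i ∩ T).Nonempty) : s.ncard ≤ T.ncard := by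
  obtain rfl | ⟨i₀, hi₀⟩ := s.eq_empty_or_nonempty
  · simp
  have : Nonempty α := ⟨(h i₀ hi₀).some⟩
  choose! f hf using h
  refine Set.ncard_le_ncard_of_injOn f (fun i hi => (hf i hi).2) (fun i hi j hj hij => ?_) hT
  by_contra hne
  exact Set.disjoint_left.1 (hB hne) (hf i hi).1 (hij ▸ (hf j hj).1)

namespace ArborescencePacking

variable {V A : Type} {tl hd : A → V}

lemma mem_dU_iff {r v : V} :
    v ∈ dU tl hd r ↔ Relation.ReflTransGen (fun x y => ∃ a, tl a = x ∧ hd a = y) r v := by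
  have hstep : mstep tl hd (Empty.elim : Empty → V) Empty.elim =
      fun x y => ∃ a, tl a = x ∧ hd a = y := by
    ext x y
    simp [mstep]
  rw [dU, Uset, mreach, hstep, Set.mem_ofPred_eq]

lemma mem_dU_self (r : V) : r ∈ dU tl hd r := Relation.ReflTransGen.refl

lemma isOutClosed_dU (A' : Finset A) (r : V) : IsOutClosed tl hd A' (dU tl hd r) :=
  fun a _ h => mem_dU_iff.2 ((mem_dU_iff.1 h).tail ⟨a, rfl, rfl⟩)

lemma coe_demands_roots {ι : Type} [Fintype ι] (r : ι → V) (X : Set V) :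
    (demands (fun i => {r i}) (fun i => dU tl hd (r i)) X : Set ι) = {i | r i ∈ dW tl hd X \ X} := by
  ext i
  simp [dW, dU, Wset, Uset, Set.Nonempty, and_comm]

lemma indeg_univ [Fintype A] (X : Set V) : indeg tl hd Finset.univ X = din tl hd X := by
  rw [din, indeg, ← Set.ncard_coe_finset]
  congr
  ext
  simp

lemma IsBranching.isArbOn {B : Set A} {r : V} {U : Set V} (h : IsBranching tl hd B {r} U)
    (hr : r ∈ U) : IsArbOn tl hd B r U := by
  obtain ⟨harcs, huniq, hreach⟩ := h
  refine ⟨hr, fun a ha => ⟨(harcs a ha).1, (harcs a ha).2.1⟩, fun a ha => (harcs a ha).2.2,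
    fun v hv hvr => huniq v ⟨hv, hvr⟩, fun v hv => ?_⟩
  obtain ⟨z, rfl, hz⟩ := hreach v hv
  exact hz

lemma exists_arc_entering {B : Set A} {X : Set V} {u v : V}
    (h : Relation.ReflTransGen (fun x y => ∃ a ∈ B, tl a = x ∧ hd a = y) u v) (hu : u ∉ X)
    (hv : v ∈ X) : ∃ a ∈ B, tl a ∉ X ∧ hd a ∈ X := by
  induction h with
  | refl => exact absurd hv hu
  | @tail w v _ hwv ih =>
    by_cases hw : w ∈ X
    · exact ih hw
    · obtain ⟨a, ha, rfl, rfl⟩ := hwv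
      exact ⟨a, ha, hw, hv⟩

end ArborescencePacking

open ArborescencePacking in
theorem kamiyama_katoh_takizawa_general
    {V A : Type} [Fintype V] [Fintype A]
    (tl hd : A → V)
    (k : ℕ) (r : Fin k → V) :
    (∃ B : Fin k → Set A,
      (∀ i j, i ≠ j → Disjoint (B i) (B j)) ∧
      ∀ i, IsArbOn tl hd (B i) (r i) (dU tl hd (r i))) ↔
    (∀ X : Set V, X.Nonempty →
      ({i | r i ∈ dW tl hd X \ X}).ncard ≤ din tl hd X) := by
  constructor
  · rintro ⟨B, hdisj, harb⟩ X -
    refine Set.ncard_le_ncard_of_pairwise_disjoint hdisj (Set.toFinite _)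
      fun i ⟨⟨x, hxX, hrx⟩, hrX⟩ => ?_
    exact exists_arc_entering ((harb i).2.2.2.2 x hrx) hrX hxX
  · intro hcond
    have hcut : CutCondition tl hd Finset.univ (fun i => {r i}) (fun i => dU tl hd (r i)) :=
      fun X hX => by
        rw [indeg_univ, ← Set.ncard_coe_finset, coe_demands_roots]
        exact hcond X hX
    obtain ⟨B, -, hdisj, hB⟩ := exists_branching_packing hcut
      (fun i => isOutClosed_dU _ (r i)) (fun i => Set.singleton_subset_iff.2 (mem_dU_self _))
    exact ⟨B, hdisj, fun i => (hB i).isArbOn (mem_dU_self _)⟩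

/-- **Kamiyama–Katoh–Takizawa.** In a digraph there exist pairwise arc-disjoint maximal
`r i`-arborescences (each spanning the set of vertices reachable from its root) iff
`d_A^-(X) ≥ |{i : r i ∈ W(X) \ X}|` for every nonempty `X ⊆ V`. -/
theorem kamiyama_katoh_takizawa
    {V A : Type} [Fintype V] [Fintype A] [DecidableEq V]
    (tl hd : A → V) (hloopless : ∀ a, tl a ≠ hd a)
    (k : ℕ) (r : Fin k → V) :
    (∃ B : Fin k → Set A,
      (∀ i j, i ≠ j → Disjoint (B i) (B j)) ∧
      ∀ i, IsArbOn tl hd (B i) (r i) (dU tl hd (r i))) ↔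
    (∀ X : Set V, X.Nonempty →
      ({i | r i ∈ dW tl hd X \ X}).ncard ≤ din tl hd X) :=
  kamiyama_katoh_takizawa_general tl hd k r
end

section
/- Let (D=(V,A),M,S,π) be a matroid-based rooted digraph for which d_A^-(X) ≥ r_M(S_{W(X)}) − r_M(S_X) holds for every nonempty X ⊆ V. If uv ∈ A and X_0 is a minimal tight set such that the arc uv enters X_0, then X_0 ⊆ W(v). -/
open Set

/-- `X` is tight: `d_A^-(X) = r_M(S_{W(X)}) − r_M(S_X)`. -/
def Tight {V A S : Type} (tl hd : A → V) (M : RankFn S) (π : S → V) (X : Set V) : Prop :=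
  M.r (π ⁻¹' dW tl hd X) = din tl hd X + M.r (π ⁻¹' X)

/-! Uncross `X₀` with `Y = W(v)`, `v` the head of the arc. No arc enters `Y` and
`W(X₀ ∩ Y) = Y`, so submodularity of the in-degree and of the rank, together with the
cut condition at `X₀ ∩ Y` and `X₀ ∪ Y`, forces `X₀ ∩ Y` to be tight as well. Minimality
then gives `X₀ ∩ Y = X₀`. -/

section Uncrossing

variable {V A S : Type} {tl hd : A → V}

theorem subset_dW (X : Set V) : X ⊆ dW tl hd X :=
  fun x hx => ⟨x, hx, .refl⟩

theorem dW_mono {X Y : Set V} (h : X ⊆ Y) : dW tl hd X ⊆ dW tl hd Y :=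
  fun _ ⟨x, hx, hzx⟩ => ⟨x, h hx, hzx⟩

theorem dW_subset_of_subset_dW {X Y : Set V} (h : X ⊆ dW tl hd Y) : dW tl hd X ⊆ dW tl hd Y :=
  fun _ ⟨_, hx, hzx⟩ => let ⟨y, hy, hxy⟩ := h hx; ⟨y, hy, hzx.trans hxy⟩

theorem tl_mem_dW_of_hd_mem {X : Set V} {b : A} (h : hd b ∈ dW tl hd X) : tl b ∈ dW tl hd X :=
  let ⟨x, hx, hbx⟩ := h
  ⟨x, hx, .head (Or.inl ⟨b, rfl, rfl⟩) hbx⟩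

theorem dW_inter_dW_singleton {X : Set V} {v : V} (hv : v ∈ X) :
    dW tl hd (X ∩ dW tl hd {v}) = dW tl hd {v} :=
  (dW_subset_of_subset_dW inter_subset_right).antisymm
    (dW_mono (singleton_subset_iff.mpr ⟨hv, subset_dW _ rfl⟩))

theorem din_inter_add_din_union_le [Finite A] (X : Set V) {Y : Set V}
    (hY : ∀ b, hd b ∈ Y → tl b ∈ Y) :
    din tl hd (X ∩ Y) + din tl hd (X ∪ Y) ≤ din tl hd X := by
  have hdisj : Disjoint {b | tl b ∉ X ∩ Y ∧ hd b ∈ X ∩ Y} {b | tl b ∉ X ∪ Y ∧ hd b ∈ X ∪ Y} :=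
    disjoint_left.mpr fun b ⟨_, hb⟩ ⟨hb', _⟩ => hb' (Or.inr (hY b hb.2))
  have hsub : {b | tl b ∉ X ∩ Y ∧ hd b ∈ X ∩ Y} ∪ {b | tl b ∉ X ∪ Y ∧ hd b ∈ X ∪ Y} ⊆
      {b | tl b ∉ X ∧ hd b ∈ X} := by
    rintro b (⟨htl, hX, hY'⟩ | ⟨htl, hX | hY'⟩)
    · exact ⟨fun h => htl ⟨h, hY b hY'⟩, hX⟩
    · exact ⟨fun h => htl (Or.inl h), hX⟩
    · exact absurd (Or.inr (hY b hY')) htl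
  unfold din
  rw [← ncard_union_eq hdisj]
  exact ncard_le_ncard hsub

theorem RankFn.r_preimage_inter_add_r_preimage_union_le (M : RankFn S) (π : S → V)
    (X Y : Set V) :
    M.r (π ⁻¹' (X ∩ Y)) + M.r (π ⁻¹' (X ∪ Y)) ≤ M.r (π ⁻¹' X) + M.r (π ⁻¹' Y) := by
  rw [preimage_inter, preimage_union, add_comm]
  exact M.submodular _ _

theorem Tight.inter_dW_singleton [Finite A] {M : RankFn S} {π : S → V}
    (hcut : ∀ X : Set V, X.Nonempty →
      M.r (π ⁻¹' dW tl hd X) ≤ din tl hd X + M.r (π ⁻¹' X))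
    {X : Set V} (hX : Tight tl hd M π X) {v : V} (hv : v ∈ X) :
    Tight tl hd M π (X ∩ dW tl hd {v}) := by
  set Y := dW tl hd {v}
  have hvY : v ∈ Y := subset_dW _ rfl
  have hinter := hcut (X ∩ Y) ⟨v, hv, hvY⟩
  have hunion := hcut (X ∪ Y) ⟨v, Or.inl hv⟩
  have hdW_union : M.r (π ⁻¹' dW tl hd X) ≤ M.r (π ⁻¹' dW tl hd (X ∪ Y)) :=
    M.mono (preimage_mono (dW_mono subset_union_left))
  have hdin : din tl hd (X ∩ Y) + din tl hd (X ∪ Y) ≤ din tl hd X :=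
    din_inter_add_din_union_le X fun _ => tl_mem_dW_of_hd_mem
  have hrank := M.r_preimage_inter_add_r_preimage_union_le π X Y
  have hdW_inter : dW tl hd (X ∩ Y) = Y := dW_inter_dW_singleton hv
  unfold Tight at hX ⊢
  rw [hdW_inter] at hinter ⊢
  omega

end Uncrossing

theorem minimal_tight_set_subset_W_general
    {V A S : Type} [Fintype A]
    (tl hd : A → V) (M : RankFn S) (π : S → V)
    (hcut : ∀ X : Set V, X.Nonempty →
      M.r (π ⁻¹' dW tl hd X) ≤ din tl hd X + M.r (π ⁻¹' X))
    (a : A) (X0 : Set V)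
    (htight : Tight tl hd M π X0)
    (henters : tl a ∉ X0 ∧ hd a ∈ X0)
    (hmin : ∀ X : Set V, X ⊆ X0 → X ≠ X0 → tl a ∉ X → hd a ∈ X →
      ¬ Tight tl hd M π X) :
    X0 ⊆ dW tl hd {hd a} := by
  by_contra hX0
  exact hmin _ inter_subset_left (fun h => hX0 (inter_eq_left.mp h))
    (fun h => henters.1 h.1) ⟨henters.2, subset_dW _ rfl⟩
    (htight.inter_dW_singleton hcut henters.2)

/-- **Lemma 10 of Király (adapted).** If the cut condition holds everywhere, `a` is an arc
with head `v`, and `X₀` is a minimal tight set entered by `a`, then `X₀ ⊆ W(v)`. -/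
theorem minimal_tight_set_subset_W
    {V A S : Type} [Fintype V] [Fintype A] [Fintype S] [DecidableEq V]
    (tl hd : A → V) (M : RankFn S) (π : S → V)
    (hcut : ∀ X : Set V, X.Nonempty →
      M.r (π ⁻¹' dW tl hd X) ≤ din tl hd X + M.r (π ⁻¹' X))
    (a : A) (X0 : Set V)
    (htight : Tight tl hd M π X0)
    (henters : tl a ∉ X0 ∧ hd a ∈ X0)
    (hmin : ∀ X : Set V, X ⊆ X0 → X ≠ X0 → tl a ∉ X → hd a ∈ X →
      ¬ Tight tl hd M π X) :
    X0 ⊆ dW tl hd {hd a} :=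
  minimal_tight_set_subset_W_general tl hd M π hcut a X0 htight henters hmin
end

section
/- Let F = (V; E, A) be a mixed graph, C_0 a strong component of F with no arcs leaving it, and let f_{C_0} : 2^{V(C_0)} \ {∅} → ℤ be defined by f_{C_0}(X) = max{ r_M(S_{W(V(C_0))}) − r_M(S_{X_0}) − d_A^-(X_0) : X ⊆ X_0 and X_0 \ X = W(Y) for some Y ⊆ W(V(C_0)) \ V(C_0) }, where M is a matroid on S with rank function r_M and π : S → V with S_X = π^{-1}(X). Then f_{C_0} is intersecting supermodular, i.e., f_{C_0}(X_1) + f_{C_0}(X_2) ≤ f_{C_0}(X_1 ∪ X_2) + f_{C_0}(X_1 ∩ X_2) whenever X_1, X_2 ⊆ V(C_0) with X_1 ∩ X_2 ≠ ∅. -/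
open Set

/-! Take maximisers `X₁ ∪ W(Y₁)` and `X₂ ∪ W(Y₂)` of `f_C(X₁)` and `f_C(X₂)`. The sets `W(Yᵢ)`
avoid `C`, so their union and intersection are again of the form `(X₁ ∪ X₂) ∪ W(Y₁ ∪ Y₂)` and
`(X₁ ∩ X₂) ∪ W(W(Y₁) ∩ W(Y₂))`, i.e. admissible for `f_C(X₁ ∪ X₂)` and `f_C(X₁ ∩ X₂)`.
The objective `r_M(S_{W(C)}) − r_M(S_{X₀}) − d_A^-(X₀)` is supermodular in `X₀`, which gives the
inequality. -/

section Reachability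

variable {V A E : Type} (tl hd : A → V) (e1 e2 : E → V)

lemma wset_empty : Wset tl hd e1 e2 ∅ = ∅ := by
  ext v
  simp [Wset]

lemma wset_union (Y₁ Y₂ : Set V) :
    Wset tl hd e1 e2 (Y₁ ∪ Y₂) = Wset tl hd e1 e2 Y₁ ∪ Wset tl hd e1 e2 Y₂ := by
  ext v
  simp only [Wset, mem_union, mem_ofPred_eq, or_and_right, exists_or]

lemma subset_wset (Y : Set V) : Y ⊆ Wset tl hd e1 e2 Y :=
  fun v hv => ⟨v, hv, .refl⟩

lemma wset_subset_wset {Y Z : Set V} (h : Y ⊆ Wset tl hd e1 e2 Z) :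
    Wset tl hd e1 e2 Y ⊆ Wset tl hd e1 e2 Z := by
  rintro v ⟨y, hy, hvy⟩
  obtain ⟨z, hz, hyz⟩ := h hy
  exact ⟨z, hz, hvy.trans hyz⟩

lemma wset_inter_wset (Y₁ Y₂ : Set V) :
    Wset tl hd e1 e2 (Wset tl hd e1 e2 Y₁ ∩ Wset tl hd e1 e2 Y₂) =
      Wset tl hd e1 e2 Y₁ ∩ Wset tl hd e1 e2 Y₂ :=
  (subset_inter (wset_subset_wset tl hd e1 e2 inter_subset_left)
    (wset_subset_wset tl hd e1 e2 inter_subset_right)).antisymm (subset_wset tl hd e1 e2 _)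

/-- A vertex of `W(Y)` lying in `C` would reach `C` from `y ∈ Y` and be reached from `C`
through `y`, putting `y` in the strong component `C`. -/
lemma disjoint_wset_of_subset_wset_diff {C Y : Set V} (hC : IsStrongComp tl hd e1 e2 C)
    (hY : Y ⊆ Wset tl hd e1 e2 C \ C) : Disjoint (Wset tl hd e1 e2 Y) C := by
  rw [disjoint_right]
  rintro v hvC ⟨y, hy, hvy⟩
  obtain ⟨⟨c, hc, hyc⟩, hyC⟩ := hY hy
  exact hyC (hC.2.2 y ⟨v, hvC, hvy, hyc.trans (hC.2.1 c hc v hvC)⟩)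

end Reachability

lemma union_inter_union_of_disjoint {α : Type*} {X₁ X₂ W₁ W₂ : Set α}
    (h₁ : Disjoint X₁ W₂) (h₂ : Disjoint W₁ X₂) :
    (X₁ ∪ W₁) ∩ (X₂ ∪ W₂) = (X₁ ∩ X₂) ∪ (W₁ ∩ W₂) := by
  ext v
  have := @disjoint_left.1 h₁ v
  have := @disjoint_left.1 h₂ v
  simp only [mem_inter_iff, mem_union]
  tauto

lemma din_union_add_din_inter_le {V A : Type} [Finite A] (tl hd : A → V) (X Y : Set V) :
    din tl hd (X ∪ Y) + din tl hd (X ∩ Y) ≤ din tl hd X + din tl hd Y := by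
  let into : Set V → Set A := fun Z => {a | tl a ∉ Z ∧ hd a ∈ Z}
  have hunion : into (X ∪ Y) ∪ into (X ∩ Y) ⊆ into X ∪ into Y := by
    rintro a (⟨ht, hh⟩ | ⟨ht, hh⟩) <;>
      simp only [into, mem_union, mem_inter_iff, mem_ofPred_eq] at * <;> tauto
  have hinter : into (X ∪ Y) ∩ into (X ∩ Y) ⊆ into X ∩ into Y := by
    rintro a ⟨⟨ht, -⟩, -, hh⟩
    simp only [into, mem_union, mem_inter_iff, mem_ofPred_eq] at *
    tauto
  calc din tl hd (X ∪ Y) + din tl hd (X ∩ Y)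
      = (into (X ∪ Y) ∪ into (X ∩ Y)).ncard + (into (X ∪ Y) ∩ into (X ∩ Y)).ncard :=
        (ncard_union_add_ncard_inter _ _).symm
    _ ≤ (into X ∪ into Y).ncard + (into X ∩ into Y).ncard :=
        Nat.add_le_add (ncard_le_ncard hunion) (ncard_le_ncard hinter)
    _ = din tl hd X + din tl hd Y := ncard_union_add_ncard_inter _ _

section Objective

variable {V A E S : Type} (tl hd : A → V) (e1 e2 : E → V) (M : RankFn S) (π : S → V)
  (C : Set V)

noncomputable def fCObjective (X₀ : Set V) : ℤ :=
  (M.r (π ⁻¹' Wset tl hd e1 e2 C) : ℤ) - M.r (π ⁻¹' X₀) - din tl hd X₀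

lemma fCObjective_add_le [Finite A] (X Y : Set V) :
    fCObjective tl hd e1 e2 M π C X + fCObjective tl hd e1 e2 M π C Y ≤
      fCObjective tl hd e1 e2 M π C (X ∪ Y) + fCObjective tl hd e1 e2 M π C (X ∩ Y) := by
  have hr := M.submodular (π ⁻¹' X) (π ⁻¹' Y)
  rw [← preimage_union, ← preimage_inter] at hr
  have hdin := din_union_add_din_inter_le tl hd X Y
  simp only [fCObjective]
  omega

lemma bddAbove_fCObjective_image (𝒳 : Set (Set V)) :
    BddAbove (fCObjective tl hd e1 e2 M π C '' 𝒳) := by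
  refine ⟨M.r (π ⁻¹' Wset tl hd e1 e2 C), ?_⟩
  rintro _ ⟨X₀, -, rfl⟩
  simp only [fCObjective]
  omega

lemma fC_eq_sSup_image (X : Set V) :
    fC tl hd e1 e2 M π C X = sSup (fCObjective tl hd e1 e2 M π C ''
      {X₀ | ∃ Y ⊆ Wset tl hd e1 e2 C \ C, Disjoint (Wset tl hd e1 e2 Y) X ∧
        X₀ = X ∪ Wset tl hd e1 e2 Y}) := by
  unfold fC
  congr 1
  ext z
  constructor
  · rintro ⟨X₀, hX, ⟨Y, hY, hdiff⟩, rfl⟩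
    refine ⟨X₀, ⟨Y, hY, hdiff ▸ disjoint_sdiff_left, ?_⟩, rfl⟩
    rw [← hdiff, union_sdiff_cancel hX]
  · rintro ⟨_, ⟨Y, hY, hdisj, rfl⟩, rfl⟩
    exact ⟨_, subset_union_left, ⟨Y, hY, union_sdiff_cancel_left hdisj.symm.le_bot⟩, rfl⟩

lemma fCObjective_le_fC {X Y : Set V} (hY : Y ⊆ Wset tl hd e1 e2 C \ C)
    (hXY : Disjoint (Wset tl hd e1 e2 Y) X) :
    fCObjective tl hd e1 e2 M π C (X ∪ Wset tl hd e1 e2 Y) ≤ fC tl hd e1 e2 M π C X := by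
  rw [fC_eq_sSup_image]
  exact le_csSup (bddAbove_fCObjective_image ..) ⟨_, ⟨Y, hY, hXY, rfl⟩, rfl⟩

lemma exists_fC_eq_fCObjective (X : Set V) : ∃ Y ⊆ Wset tl hd e1 e2 C \ C,
    fC tl hd e1 e2 M π C X = fCObjective tl hd e1 e2 M π C (X ∪ Wset tl hd e1 e2 Y) := by
  have hne : Set.Nonempty {X₀ | ∃ Y ⊆ Wset tl hd e1 e2 C \ C,
      Disjoint (Wset tl hd e1 e2 Y) X ∧ X₀ = X ∪ Wset tl hd e1 e2 Y} :=
    ⟨X, ∅, empty_subset _, by simp [wset_empty]⟩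
  obtain ⟨_, ⟨Y, hY, -, rfl⟩, hmax⟩ :=
    Int.csSup_mem (hne.image _) (bddAbove_fCObjective_image ..)
  exact ⟨Y, hY, by rw [fC_eq_sSup_image, ← hmax]⟩

end Objective

theorem fC_intersecting_supermodular_general
    {V A E S : Type} [Fintype A]
    (tl hd : A → V) (e1 e2 : E → V) (M : RankFn S) (π : S → V)
    (C : Set V) (hC : IsStrongComp tl hd e1 e2 C)
    (X1 X2 : Set V) (h1 : X1 ⊆ C) (h2 : X2 ⊆ C) :
    fC tl hd e1 e2 M π C X1 + fC tl hd e1 e2 M π C X2 ≤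
      fC tl hd e1 e2 M π C (X1 ∪ X2) + fC tl hd e1 e2 M π C (X1 ∩ X2) := by
  obtain ⟨Y₁, hY₁, hf₁⟩ := exists_fC_eq_fCObjective tl hd e1 e2 M π C X1
  obtain ⟨Y₂, hY₂, hf₂⟩ := exists_fC_eq_fCObjective tl hd e1 e2 M π C X2
  set W := Wset tl hd e1 e2
  have hW₁ : Disjoint (W Y₁) C := disjoint_wset_of_subset_wset_diff tl hd e1 e2 hC hY₁
  have hW₂ : Disjoint (W Y₂) C := disjoint_wset_of_subset_wset_diff tl hd e1 e2 hC hY₂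
  have hunion := fCObjective_le_fC tl hd e1 e2 M π C (X := X1 ∪ X2) (union_subset hY₁ hY₂)
    (by rw [wset_union]; exact (hW₁.sup_left hW₂).mono_right (union_subset h1 h2))
  rw [wset_union, ← union_union_union_comm] at hunion
  have hinter := fCObjective_le_fC tl hd e1 e2 M π C (X := X1 ∩ X2) (Y := W Y₁ ∩ W Y₂)
    (fun v hv => ⟨wset_subset_wset tl hd e1 e2 (hY₁.trans sdiff_subset) hv.1,
      disjoint_left.1 hW₁ hv.1⟩)
    (by rw [wset_inter_wset]; exact hW₁.mono inter_subset_left (inter_subset_left.trans h1))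
  rw [wset_inter_wset, ← union_inter_union_of_disjoint (hW₂.symm.mono_left h1)
    (hW₁.mono_right h2)] at hinter
  linarith [fCObjective_add_le tl hd e1 e2 M π C (X1 ∪ W Y₁) (X2 ∪ W Y₂)]

/-- **Claim: `f_{C₀}` is intersecting supermodular** for a strong component `C₀` with no
arcs leaving it. -/
theorem fC_intersecting_supermodular
    {V A E S : Type} [Fintype V] [Fintype A] [Fintype E] [Fintype S] [DecidableEq V]
    (tl hd : A → V) (e1 e2 : E → V) (M : RankFn S) (π : S → V)
    (C : Set V) (hC : IsStrongComp tl hd e1 e2 C)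
    (hout : ∀ a : A, tl a ∈ C → hd a ∈ C)
    (X1 X2 : Set V) (h1 : X1 ⊆ C) (h2 : X2 ⊆ C) (hmeet : (X1 ∩ X2).Nonempty) :
    fC tl hd e1 e2 M π C X1 + fC tl hd e1 e2 M π C X2 ≤
      fC tl hd e1 e2 M π C (X1 ∪ X2) + fC tl hd e1 e2 M π C (X1 ∩ X2) :=
  fC_intersecting_supermodular_general tl hd e1 e2 M π C hC X1 X2 h1 h2
end

section
/- Let (F=(V;E,A),M,S,π) be a matroid-based rooted mixed graph. If there exists a maximal M-independent packing of mixed arborescences in F, then π is M-independent and e_E(P) + Σ_{q=1}^t d_A^-(X^q) ≥ Σ_{q=1}^t ( r_M(S_{W(V(C))}) − r_M(S_{(X^q)_O}) ) holds for any family of bi-sets {X^1, ..., X^t} such that P = {(X^1)_I, ..., (X^t)_I} is a subpartition of V(C) for some strong component C and (X^q)_O \ (X^q)_I = W(Y^q) for some Y^q ⊆ W(V(C)) \ V(C) for each q. -/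
open Set

/-! Fix a vertex `v_q` in each part `(X^q)_I`. The set `S_{v_q} = {s : v_q ∈ V(T_s)}` is
independent of size `r_M(S_{W(V(C))})`, so at most `r_M(S_{(X^q)_O})` of its members have their
root in `(X^q)_O`. For every other `s`, the path of `T_s` from its root to `v_q` must enter
`(X^q)_I` directly from outside `(X^q)_O`, because `(X^q)_O \ (X^q)_I = W(Y^q)` is closed under
predecessors. The packing is disjoint, so these entering elements are distinct; an entering edge
has its head in exactly one part, hence is counted once in `e_E(P)`. -/

section Packing

open Function

variable {V A E S : Type}

theorem RankFn.Indep.subset [Finite S] {M : RankFn S} {X Y : Set S} (hX : M.Indep X)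
    (hYX : Y ⊆ X) : M.Indep Y := by
  have hsub := M.submodular Y (X \ Y)
  rw [Set.union_sdiff_cancel hYX, Set.inter_sdiff_self, M.rank_empty] at hsub
  have hdiff := M.le_ncard (X \ Y)
  have hcard := Set.ncard_sdiff_add_ncard_of_subset hYX
  have hY := M.le_ncard Y
  unfold RankFn.Indep at hX ⊢
  omega

theorem RankFn.Indep.ncard_le_ncard_diff_add_r [Finite S] {M : RankFn S} {I : Set S}
    (hI : M.Indep I) (X : Set S) : I.ncard ≤ (I \ X).ncard + M.r X := by
  have hinter : (I ∩ X).ncard ≤ M.r X :=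
    (hI.subset Set.inter_subset_left).symm.le.trans (M.mono Set.inter_subset_right)
  have := Set.ncard_inter_add_ncard_sdiff_eq_ncard I X
  omega

theorem Set.ncard_eq_ncard_preimage_inl_add_ncard_preimage_inr {α β : Type} [Finite α]
    [Finite β] (K : Set (α ⊕ β)) :
    K.ncard = (Sum.inl ⁻¹' K).ncard + (Sum.inr ⁻¹' K).ncard := by
  conv_lhs => rw [← Set.image_preimage_inl_union_image_preimage_inr K]
  rw [Set.ncard_union_eq (Set.isCompl_range_inl_range_inr.disjoint.mono
      (Set.image_subset_range _ _) (Set.image_subset_range _ _)),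
    Set.ncard_image_of_injective _ Sum.inl_injective,
    Set.ncard_image_of_injective _ Sum.inr_injective]

theorem Set.ncard_le_ncard_of_pairwise_disjoint_inter_nonempty {ι β : Type} [Finite β]
    {B : ι → Set β} (hB : Pairwise (Disjoint on B)) {T : Set ι} {K : Set β}
    (hTK : ∀ i ∈ T, (B i ∩ K).Nonempty) : T.ncard ≤ K.ncard := by
  choose f hf using hTK
  refine Nat.card_le_card_of_injective (fun i : T => (⟨f i i.2, (hf i i.2).2⟩ : K)) ?_
  rintro ⟨i, hi⟩ ⟨j, hj⟩ hij
  have hfij : f i hi = f j hj := congrArg Subtype.val hij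
  refine Subtype.ext (by_contra fun hne => ?_)
  exact Set.disjoint_left.mp (hB hne) (hf i hi).1 (hfij ▸ (hf j hj).1)

theorem Relation.ReflTransGen.exists_step_into {α : Type} {R : α → α → Prop} {O I : Set α}
    (hIO : I ⊆ O) (hcl : ∀ x y, R x y → y ∈ O \ I → x ∈ O) {a b : α}
    (h : Relation.ReflTransGen R a b) (ha : a ∉ O) (hb : b ∈ I) :
    ∃ x y, R x y ∧ x ∉ O ∧ y ∈ I := by
  induction h using Relation.ReflTransGen.head_induction_on with
  | refl => exact absurd (hIO hb) ha
  | @head x y hxy _ ih =>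
    by_cases hyI : y ∈ I
    · exact ⟨x, y, hxy, ha, hyI⟩
    · exact ih fun hyO => ha (hcl x y hxy ⟨hyO, hyI⟩)

theorem mem_Wset_of_mstep {tl hd : A → V} {e1 e2 : E → V} {Y : Set V} {u w : V}
    (huw : mstep tl hd e1 e2 u w) (hw : w ∈ Wset tl hd e1 e2 Y) : u ∈ Wset tl hd e1 e2 Y :=
  let ⟨y, hy, hwy⟩ := hw
  ⟨y, hy, Relation.ReflTransGen.head huw hwy⟩

theorem IsStrongComp.Wset_singleton {tl hd : A → V} {e1 e2 : E → V} {C : Set V}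
    (hC : IsStrongComp tl hd e1 e2 C) {v : V} (hv : v ∈ C) :
    Wset tl hd e1 e2 {v} = Wset tl hd e1 e2 C := by
  ext u
  constructor
  · rintro ⟨x, hx, hu⟩
    exact ⟨x, (hx : x = v) ▸ hv, hu⟩
  · rintro ⟨c, hc, hu⟩
    exact ⟨v, rfl, hu.trans (hC.2.1 c hc v hv)⟩

theorem mstep_ctl_chd (tl hd : A → V) (e1 e2 : E → V) (o : E → Bool) (b : A ⊕ E) :
    mstep tl hd e1 e2 (ctl tl e1 e2 o b) (chd hd e1 e2 o b) := by
  rcases b with a | e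
  · exact Or.inl ⟨a, rfl, rfl⟩
  · refine Or.inr ⟨e, ?_⟩
    cases h : o e <;> simp [ctl, chd, h]

theorem ctl_inr_mem_and_chd_inr_mem_iff (tl hd : A → V) (e1 e2 : E → V) (o : E → Bool) (e : E)
    (X : Set V) :
    ctl tl e1 e2 o (.inr e) ∈ X ∧ chd hd e1 e2 o (.inr e) ∈ X ↔ e1 e ∈ X ∧ e2 e ∈ X := by
  cases h : o e <;> simp [ctl, chd, h, and_comm]

theorem mem_or_mem_of_chd_inr_mem (hd : A → V) (e1 e2 : E → V) (o : E → Bool) {e : E}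
    {X : Set V} (h : chd hd e1 e2 o (.inr e) ∈ X) : e1 e ∈ X ∨ e2 e ∈ X := by
  cases ho : o e
  · exact Or.inl (by simpa [chd, ho] using h)
  · exact Or.inr (by simpa [chd, ho] using h)

def entering {β : Type} (t h : β → V) (XO XI : Set V) : Set β :=
  {b | t b ∉ XO ∧ h b ∈ XI}

theorem IsArbOn.exists_mem_entering {β : Type} {t h : β → V} {B : Set β} {r : V} {VT : Set V}
    (hT : IsArbOn t h B r VT) {XO XI : Set V} (hIO : XI ⊆ XO)
    (hcl : ∀ b, h b ∈ XO \ XI → t b ∈ XO) (hr : r ∉ XO) {v : V} (hv : v ∈ VT) (hvI : v ∈ XI) :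
    (B ∩ entering t h XO XI).Nonempty := by
  obtain ⟨_, _, ⟨b, hb, rfl, rfl⟩, hbO, hbI⟩ :=
    (hT.2.2.2.2 v hv).exists_step_into hIO (fun _ _ ⟨b, _, hx, hy⟩ hyO => hx ▸ hcl b (hy ▸ hyO))
      hr hvI
  exact ⟨b, hb, hbO, hbI⟩

theorem ncard_le_ncard_entering_add_r [Finite A] [Finite E] [Finite S] {tl hd : A → V}
    {e1 e2 : E → V} {M : RankFn S} {π : S → V} {o : E → Bool} {B : S → Set (A ⊕ E)}
    {VT : S → Set V} (hdisj : Pairwise (Disjoint on B))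
    (harb : ∀ s, IsArbOn (ctl tl e1 e2 o) (chd hd e1 e2 o) (B s) (π s) (VT s))
    {v : V} (hvI : M.Indep {s | v ∈ VT s}) {XO XI Y : Set V} (hv : v ∈ XI) (hIO : XI ⊆ XO)
    (hY : XO \ XI = Wset tl hd e1 e2 Y) :
    {s | v ∈ VT s}.ncard ≤
      (entering (ctl tl e1 e2 o) (chd hd e1 e2 o) XO XI).ncard + M.r (π ⁻¹' XO) := by
  have hcl : ∀ b, chd hd e1 e2 o b ∈ XO \ XI → ctl tl e1 e2 o b ∈ XO := by
    intro b hb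
    rw [hY] at hb
    have hmem := mem_Wset_of_mstep (mstep_ctl_chd tl hd e1 e2 o b) hb
    rw [← hY] at hmem
    exact hmem.1
  refine (hvI.ncard_le_ncard_diff_add_r _).trans (Nat.add_le_add_right ?_ _)
  exact Set.ncard_le_ncard_of_pairwise_disjoint_inter_nonempty hdisj
    fun s ⟨hs, hsO⟩ => (harb s).exists_mem_entering hIO (hcl ·) hsO hs hv

theorem sum_ncard_entering_inr_le_eP (tl hd : A → V) (e1 e2 : E → V) (o : E → Bool) {t : ℕ}
    [Finite E] {XO XI : Fin t → Set V} (hIO : ∀ q, XI q ⊆ XO q)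
    (hdis : ∀ q q', q ≠ q' → Disjoint (XI q) (XI q')) :
    ∑ q, (Sum.inr ⁻¹' entering (ctl tl e1 e2 o) (chd hd e1 e2 o) (XO q) (XI q)).ncard ≤
      eP e1 e2 XI := by
  rw [← finsum_eq_sum_of_fintype, ← Set.ncard_iUnion_of_finite (fun _ => Set.toFinite _)
    fun q q' hqq' => Set.disjoint_left.mpr fun _ he he' => Set.disjoint_left.mp
      (hdis q q' hqq') he.2 he'.2]
  refine Set.ncard_le_ncard ?_
  intro e he
  obtain ⟨q, hO, hI⟩ := Set.mem_iUnion.mp he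
  refine ⟨⟨q, mem_or_mem_of_chd_inr_mem hd e1 e2 o hI⟩, fun ⟨q', h⟩ => ?_⟩
  rw [← ctl_inr_mem_and_chd_inr_mem_iff tl hd e1 e2 o e] at h
  obtain rfl : q' = q := by_contra fun hne => Set.disjoint_left.mp (hdis q' q hne) h.2 hI
  exact hO (hIO q' h.1)

end Packing

theorem packing_implies_biset_condition_general
    {V A E S : Type} [Fintype A] [Fintype E] [Fintype S]
    (tl hd : A → V) (e1 e2 : E → V) (M : RankFn S) (π : S → V)
    (hpack : MaxIndMixedPacking tl hd e1 e2 M π) :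
    MIndep M π ∧
    ∀ C : Set V, IsStrongComp tl hd e1 e2 C →
    ∀ (t : ℕ) (XO XI : Fin t → Set V),
      (∀ q, (XI q).Nonempty) → (∀ q, XI q ⊆ C) →
      (∀ q q', q ≠ q' → Disjoint (XI q) (XI q')) →
      (∀ q, XI q ⊆ XO q) →
      (∀ q, ∃ Y ⊆ Wset tl hd e1 e2 C \ C, XO q \ XI q = Wset tl hd e1 e2 Y) →
      (∑ q, ((M.r (π ⁻¹' Wset tl hd e1 e2 C) : ℤ) - M.r (π ⁻¹' XO q))) ≤
        (eP e1 e2 XI : ℤ) +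
          ∑ q, (({a : A | tl a ∉ XO q ∧ hd a ∈ XI q}).ncard : ℤ) := by
  obtain ⟨o, B, VT, hdisj, harb, hvert⟩ := hpack
  refine ⟨fun w => (hvert w).1.subset fun s (hs : π s = w) => hs ▸ (harb s).1, ?_⟩
  intro C hC t XO XI hne hsubC hdis hIO hY
  choose v hv using hne
  have hq : ∀ q, (M.r (π ⁻¹' Wset tl hd e1 e2 C) : ℤ) - M.r (π ⁻¹' XO q) ≤
      (entering (ctl tl e1 e2 o) (chd hd e1 e2 o) (XO q) (XI q)).ncard := by
    intro q
    obtain ⟨Y, -, hYq⟩ := hY q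
    have := ncard_le_ncard_entering_add_r hdisj harb (hvert (v q)).1 (hv q) (hIO q) hYq
    rw [(hvert (v q)).2, hC.Wset_singleton (hsubC q (hv q))] at this
    omega
  have hedges := sum_ncard_entering_inr_le_eP tl hd e1 e2 o hIO hdis
  calc _ ≤ ∑ q, ((entering (ctl tl e1 e2 o) (chd hd e1 e2 o) (XO q) (XI q)).ncard : ℤ) :=
        Finset.sum_le_sum fun q _ => hq q
    _ = ∑ q, ((Sum.inr ⁻¹' entering (ctl tl e1 e2 o) (chd hd e1 e2 o) (XO q) (XI q)).ncard : ℤ) +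
          ∑ q, ((Sum.inl ⁻¹' entering (ctl tl e1 e2 o) (chd hd e1 e2 o) (XO q) (XI q)).ncard :
            ℤ) := by
        rw [← Finset.sum_add_distrib]
        simp only [Set.ncard_eq_ncard_preimage_inl_add_ncard_preimage_inr (entering _ _ _ _),
          Nat.cast_add, add_comm]
    _ ≤ _ := add_le_add (by exact_mod_cast hedges) le_rfl

/-- **(i) ⇒ (ii).** If a maximal `M`-independent packing of mixed arborescences exists,
then `π` is `M`-independent and the bi-set cut condition (ii) holds for every strong
component. -/
theorem packing_implies_biset_condition
    {V A E S : Type} [Fintype V] [Fintype A] [Fintype E] [Fintype S] [DecidableEq V]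
    (tl hd : A → V) (e1 e2 : E → V) (M : RankFn S) (π : S → V)
    (hpack : MaxIndMixedPacking tl hd e1 e2 M π) :
    MIndep M π ∧
    ∀ C : Set V, IsStrongComp tl hd e1 e2 C →
    ∀ (t : ℕ) (XO XI : Fin t → Set V),
      (∀ q, (XI q).Nonempty) → (∀ q, XI q ⊆ C) →
      (∀ q q', q ≠ q' → Disjoint (XI q) (XI q')) →
      (∀ q, XI q ⊆ XO q) →
      (∀ q, ∃ Y ⊆ Wset tl hd e1 e2 C \ C, XO q \ XI q = Wset tl hd e1 e2 Y) →
      (∑ q, ((M.r (π ⁻¹' Wset tl hd e1 e2 C) : ℤ) - M.r (π ⁻¹' XO q))) ≤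
        (eP e1 e2 XI : ℤ) +
          ∑ q, (({a : A | tl a ∉ XO q ∧ hd a ∈ XI q}).ncard : ℤ) :=
  packing_implies_biset_condition_general tl hd e1 e2 M π hpack
end
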